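/- Let A = ℝ[x] and B = ℂ[x], with K = ℝ(x) and L = ℂ(x) their fraction fields, and let ℍ = {z ∈ ℂ : Im(z) > 0} be the open upper half-plane. Then the group homomorphism from the free abelian group on the set ℍ to the polar group Π(A) = L*/(B*·K*), determined by sending the generator corresponding to z ∈ ℍ to the class of x − z, is a group isomorphism; in particular Π(ℝ[x]) is free abelian with basis {[x − z] : z ∈ ℍ}. -/

import Mathlib

open Polynomial

/-- `ℝ[x]`, realized as the subring of `B = ℂ[x]` of polynomials with real
coefficients (the image of `ℝ[x]` under coefficientwise inclusion `ℝ → ℂ`). -/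
noncomputable def realPolySubring : Subring (Polynomial ℂ) :=
  (Polynomial.mapRingHom (algebraMap ℝ ℂ)).range

/-- The subgroup `B* · K*` of `L* = ℂ(x)*`, where `B = ℂ[x]` and `K = ℝ(x)`. -/
noncomputable def polarN : Subgroup (FractionRing (Polynomial ℂ))ˣ :=
  Subgroup.closure {u : (FractionRing (Polynomial ℂ))ˣ |
    (∃ b : (Polynomial ℂ)ˣ,
      (u : FractionRing (Polynomial ℂ)) =
        algebraMap (Polynomial ℂ) (FractionRing (Polynomial ℂ)) (b : Polynomial ℂ)) ∨
    (∃ a : realPolySubring,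
      (u : FractionRing (Polynomial ℂ)) =
        algebraMap (Polynomial ℂ) (FractionRing (Polynomial ℂ)) (a : Polynomial ℂ))}

/-- The class `[f] ∈ Π(ℝ[x]) = L*/(B*·K*)` of a nonzero `f ∈ ℂ[x]`. -/
noncomputable def polarCls (f : Polynomial ℂ) (hf : f ≠ 0) :
    (FractionRing (Polynomial ℂ))ˣ ⧸ polarN :=
  QuotientGroup.mk (Units.mk0
    (algebraMap (Polynomial ℂ) (FractionRing (Polynomial ℂ)) f)
    (by rwa [Ne, IsFractionRing.to_map_eq_zero_iff]))

open ComplexConjugate nonZeroDivisors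

/-!
Let `ord_z` be the order of vanishing at `z` on `ℂ(x)*`. The homomorphism `ord_z - ord_{z̄}`
kills `ℂ[x]*` (units have no zeros) and `ℝ(x)*` (zeros of real polynomials come in conjugate
pairs), so it descends to `Π(ℝ[x])`; for `z ∈ ℍ` it sends `[x - w]`, `w ∈ ℍ`, to `δ_{zw}`,
which gives injectivity. Every nonzero complex polynomial is a constant times linear factors
`x - z`, and `[x - z]` is trivial for real `z` and equals `[x - z̄]⁻¹` for `Im z < 0`, since
`(x - z)(x - z̄)` is real; this gives surjectivity.
-/

theorem IsFractionRing.ne_zero_of_units_mul_algebraMap_eq {R K : Type*} [CommRing R]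
    [Field K] [Algebra R K] [IsFractionRing R K] {u : Kˣ} {p q : R} (hq : q ≠ 0)
    (h : (u : K) * algebraMap R K q = algebraMap R K p) : p ≠ 0 := by
  rintro rfl
  rw [map_zero] at h
  exact mul_ne_zero u.ne_zero ((IsFractionRing.to_map_eq_zero_iff).not.mpr hq) h

namespace Polynomial

section OrderOfVanishing

variable {k : Type*} [CommRing k] [IsDomain k] {K : Type*} [Field K] [Algebra k[X] K]
  [IsFractionRing k[X] K]

theorem rootMultiplicity_sub_eq_of_mul_eq {z : k} {p q p' q' : k[X]} (hp : p ≠ 0) (hq : q ≠ 0)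
    (hp' : p' ≠ 0) (hq' : q' ≠ 0) (h : p * q' = p' * q) :
    (rootMultiplicity z p : ℤ) - rootMultiplicity z q =
      rootMultiplicity z p' - rootMultiplicity z q' := by
  have := congrArg (rootMultiplicity z) h
  rw [rootMultiplicity_mul (mul_ne_zero hp hq'), rootMultiplicity_mul (mul_ne_zero hp' hq)] at this
  omega

theorem rootMultiplicity_sec_sub_eq (z : k) {u : Kˣ} {p q : k[X]} (hq : q ≠ 0)
    (h : (u : K) * algebraMap k[X] K q = algebraMap k[X] K p) :
    (rootMultiplicity z (IsLocalization.sec k[X]⁰ (u : K)).1 : ℤ) -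
        rootMultiplicity z (IsLocalization.sec k[X]⁰ (u : K)).2 =
      rootMultiplicity z p - rootMultiplicity z q := by
  set r := IsLocalization.sec k[X]⁰ (u : K)
  have hr : (u : K) * algebraMap k[X] K r.2 = algebraMap k[X] K r.1 :=
    IsLocalization.sec_spec k[X]⁰ (u : K)
  have hr2 : (r.2 : k[X]) ≠ 0 := nonZeroDivisors.ne_zero r.2.2
  refine rootMultiplicity_sub_eq_of_mul_eq
    (IsFractionRing.ne_zero_of_units_mul_algebraMap_eq hr2 hr) hr2
    (IsFractionRing.ne_zero_of_units_mul_algebraMap_eq hq h) hq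
    (IsFractionRing.injective k[X] K ?_)
  rw [map_mul, map_mul, ← hr, ← h]
  ring

variable (K) in
noncomputable def ordAt (z : k) : Kˣ →* Multiplicative ℤ where
  toFun u := .ofAdd (rootMultiplicity z (IsLocalization.sec k[X]⁰ (u : K)).1 -
    rootMultiplicity z (IsLocalization.sec k[X]⁰ (u : K)).2)
  map_one' := by
    rw [rootMultiplicity_sec_sub_eq z (p := 1) one_ne_zero (by rw [Units.val_one, one_mul]),
      sub_self, ofAdd_zero]
  map_mul' u v := by
    set r := IsLocalization.sec k[X]⁰ (u : K)
    set s := IsLocalization.sec k[X]⁰ (v : K)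
    have hr : (u : K) * algebraMap k[X] K r.2 = algebraMap k[X] K r.1 :=
      IsLocalization.sec_spec k[X]⁰ (u : K)
    have hs : (v : K) * algebraMap k[X] K s.2 = algebraMap k[X] K s.1 :=
      IsLocalization.sec_spec k[X]⁰ (v : K)
    have hr2 : (r.2 : k[X]) ≠ 0 := nonZeroDivisors.ne_zero r.2.2
    have hs2 : (s.2 : k[X]) ≠ 0 := nonZeroDivisors.ne_zero s.2.2
    have hr1 := IsFractionRing.ne_zero_of_units_mul_algebraMap_eq hr2 hr
    have hs1 := IsFractionRing.ne_zero_of_units_mul_algebraMap_eq hs2 hs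
    rw [rootMultiplicity_sec_sub_eq z (p := r.1 * s.1) (mul_ne_zero hr2 hs2)
      (by rw [Units.val_mul, map_mul, map_mul, ← hr, ← hs]; ring), ← ofAdd_add,
      rootMultiplicity_mul (mul_ne_zero hr1 hs1), rootMultiplicity_mul (mul_ne_zero hr2 hs2)]
    push_cast
    congr 1
    ring

theorem ordAt_eq (z : k) {u : Kˣ} {p q : k[X]} (hq : q ≠ 0)
    (h : (u : K) * algebraMap k[X] K q = algebraMap k[X] K p) :
    ordAt K z u = .ofAdd ((rootMultiplicity z p : ℤ) - rootMultiplicity z q) :=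
  congrArg Multiplicative.ofAdd (rootMultiplicity_sec_sub_eq z hq h)

theorem ordAt_of_val_eq (z : k) {u : Kˣ} {p : k[X]} (h : (u : K) = algebraMap k[X] K p) :
    ordAt K z u = .ofAdd (rootMultiplicity z p : ℤ) := by
  rw [ordAt_eq z (p := p) one_ne_zero (by rw [map_one, mul_one, h]), ← C_1, rootMultiplicity_C,
    Nat.cast_zero, sub_zero]

end OrderOfVanishing

theorem rootMultiplicity_conj_map_ofReal (f : ℝ[X]) (z : ℂ) :
    rootMultiplicity (conj z) (f.map (algebraMap ℝ ℂ)) =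
      rootMultiplicity z (f.map (algebraMap ℝ ℂ)) := by
  rw [eq_rootMultiplicity_map (starRingEnd ℂ).injective z, map_map]
  congr 2
  ext r
  exact (Complex.conj_ofReal r).symm

theorem X_sub_C_mul_X_sub_C_conj (z : ℂ) :
    (X - C z) * (X - C (conj z)) =
      (X ^ 2 - C (2 * z.re) * X + C (Complex.normSq z)).map (algebraMap ℝ ℂ) := by
  have hsum : C (algebraMap ℝ ℂ 2) * C (algebraMap ℝ ℂ z.re) = C z + C (conj z) := by
    rw [← C_mul, ← C_add, ← map_mul, Complex.add_conj]; rfl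
  have hprod : algebraMap ℝ ℂ (Complex.normSq z) = z * conj z := (Complex.mul_conj z).symm
  simp only [Polynomial.map_add, Polynomial.map_sub, Polynomial.map_mul, Polynomial.map_pow,
    map_X, map_C, hprod, C_mul]
  linear_combination X * hsum

end Polynomial

theorem polarCls_mul {f g : ℂ[X]} (hf : f ≠ 0) (hg : g ≠ 0) :
    polarCls (f * g) (mul_ne_zero hf hg) = polarCls f hf * polarCls g hg := by
  rw [polarCls, polarCls, polarCls, ← QuotientGroup.mk_mul]
  congr 1
  exact Units.ext (map_mul _ f g)

theorem polarCls_eq_one_of_isUnit {f : ℂ[X]} (h : IsUnit f) (hf : f ≠ 0) : polarCls f hf = 1 :=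
  (QuotientGroup.eq_one_iff _).mpr (Subgroup.subset_closure (Or.inl ⟨h.unit, rfl⟩))

theorem polarCls_eq_one_of_eq_map_ofReal {p : ℂ[X]} (f : ℝ[X])
    (h : p = f.map (algebraMap ℝ ℂ)) (hp : p ≠ 0) : polarCls p hp = 1 :=
  (QuotientGroup.eq_one_iff _).mpr (Subgroup.subset_closure (Or.inr ⟨⟨p, f, h.symm⟩, rfl⟩))

theorem polarCls_X_sub_C_conj (z : ℂ) :
    polarCls (X - C (conj z)) (X_sub_C_ne_zero _) = (polarCls (X - C z) (X_sub_C_ne_zero z))⁻¹ :=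
  eq_inv_of_mul_eq_one_right <| by
    rw [← polarCls_mul]
    exact polarCls_eq_one_of_eq_map_ofReal _ (X_sub_C_mul_X_sub_C_conj z) _

theorem polarN_le_ker_ordAt_div_ordAt_conj (z : ℂ) :
    polarN ≤ (ordAt (FractionRing ℂ[X]) z / ordAt _ (conj z)).ker := by
  rw [polarN, Subgroup.closure_le]
  rintro u (⟨b, hb⟩ | ⟨⟨p, f, hf⟩, hb⟩) <;>
    rw [SetLike.mem_coe, MonoidHom.mem_ker, MonoidHom.div_apply, ordAt_of_val_eq _ hb,
      ordAt_of_val_eq _ hb, div_eq_one]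
  · obtain ⟨c, -, hc⟩ := Polynomial.isUnit_iff.mp b.isUnit
    rw [← hc, rootMultiplicity_C, rootMultiplicity_C]
  · simp only [← hf, coe_mapRingHom, rootMultiplicity_conj_map_ofReal]

noncomputable def polarOrd (z : ℂ) : (FractionRing ℂ[X])ˣ ⧸ polarN →* Multiplicative ℤ :=
  QuotientGroup.lift polarN _ (polarN_le_ker_ordAt_div_ordAt_conj z)

theorem polarOrd_polarCls (z : ℂ) (f : ℂ[X]) (hf : f ≠ 0) :
    polarOrd z (polarCls f hf) =
      .ofAdd ((rootMultiplicity z f : ℤ) - rootMultiplicity (conj z) f) := by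
  rw [polarCls, polarOrd, QuotientGroup.lift_mk, MonoidHom.div_apply, ordAt_of_val_eq _ rfl,
    ordAt_of_val_eq _ rfl, ofAdd_sub]

theorem polarOrd_polarCls_X_sub_C {z w : ℂ} (hz : 0 < z.im) (hw : 0 < w.im) :
    polarOrd z (polarCls (X - C w) (X_sub_C_ne_zero w)) = .ofAdd (if w = z then 1 else 0) := by
  have hconj : conj z ≠ w := fun h => by
    have := congrArg Complex.im h
    rw [Complex.conj_im] at this
    linarith
  rw [polarOrd_polarCls, rootMultiplicity_X_sub_C, rootMultiplicity_X_sub_C, if_neg hconj]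
  by_cases h : w = z
  · simp [h]
  · simp [h, Ne.symm h]

noncomputable def polarMap :
    Multiplicative (FreeAbelianGroup {z : ℂ // 0 < z.im}) →* (FractionRing ℂ[X])ˣ ⧸ polarN :=
  AddMonoidHom.toMultiplicativeLeft <| FreeAbelianGroup.lift fun z =>
    Additive.ofMul (polarCls (X - C z.1) (X_sub_C_ne_zero z.1))

theorem polarMap_of (z : {z : ℂ // 0 < z.im}) :
    polarMap (.ofAdd (.of z)) = polarCls (X - C z.1) (X_sub_C_ne_zero z.1) := by
  simp [polarMap]

theorem polarOrd_polarMap (z : {z : ℂ // 0 < z.im}) (a : FreeAbelianGroup {z : ℂ // 0 < z.im}) :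
    polarOrd z (polarMap (.ofAdd a)) = .ofAdd (FreeAbelianGroup.toFinsupp a z) := by
  induction a using FreeAbelianGroup.induction_on with
  | zero => rw [ofAdd_zero, map_one, map_one, map_zero, Finsupp.coe_zero, Pi.zero_apply, ofAdd_zero]
  | of w =>
    rw [polarMap_of, polarOrd_polarCls_X_sub_C z.2 w.2, FreeAbelianGroup.toFinsupp_of,
      Finsupp.single_apply]
    simp only [Subtype.ext_iff]
  | neg a ih =>
    rw [ofAdd_neg, map_inv, map_inv, ih, map_neg, Finsupp.neg_apply, ofAdd_neg]
  | add a b iha ihb =>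
    rw [ofAdd_add, map_mul, map_mul, iha, ihb, map_add, Finsupp.add_apply, ofAdd_add]

theorem polarMap_injective : Function.Injective polarMap := by
  rw [injective_iff_map_eq_one]
  intro a ha
  have hsupp : FreeAbelianGroup.toFinsupp a.toAdd = 0 := Finsupp.ext fun z => by
    simpa [ha] using (polarOrd_polarMap z a.toAdd).symm
  have := congrArg Finsupp.toFreeAbelianGroup hsupp
  rwa [Finsupp.toFreeAbelianGroup_toFinsupp, map_zero, toAdd_eq_zero] at this

theorem polarCls_X_sub_C_mem_range (z : ℂ) :
    polarCls (X - C z) (X_sub_C_ne_zero z) ∈ polarMap.range := by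
  rcases lt_trichotomy z.im 0 with hz | hz | hz
  · rw [← Complex.conj_conj z, polarCls_X_sub_C_conj]
    exact inv_mem ⟨_, polarMap_of ⟨conj z, by simpa using hz⟩⟩
  · have hreal : (z.re : ℂ) = z := Complex.ext rfl (by simp [hz])
    rw [polarCls_eq_one_of_eq_map_ofReal (X - C z.re) (by simp [hreal])]
    exact one_mem _
  · exact ⟨_, polarMap_of ⟨z, hz⟩⟩

theorem polarCls_mem_range {f : ℂ[X]} (hf : f ≠ 0) : polarCls f hf ∈ polarMap.range := by
  suffices ∀ g : ℂ[X], g.Splits → ∀ hg : g ≠ 0, polarCls g hg ∈ polarMap.range from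
    this f (IsAlgClosed.splits f) hf
  intro g hg
  induction hg using Submonoid.closure_induction with
  | mem g hg =>
    rcases hg with ⟨a, rfl⟩ | ⟨a, rfl⟩ <;> intro hg
    · rw [polarCls_eq_one_of_isUnit (isUnit_C.mpr (isUnit_iff_ne_zero.mpr (C_ne_zero.mp hg)))]
      exact one_mem _
    · convert polarCls_X_sub_C_mem_range (-a) using 2
      simp [sub_eq_add_neg]
  | one => exact fun h => polarCls_eq_one_of_isUnit isUnit_one h ▸ one_mem _
  | mul g h _ _ ihg ihh =>
    intro hgh
    rw [polarCls_mul (left_ne_zero_of_mul hgh) (right_ne_zero_of_mul hgh)]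
    exact mul_mem (ihg _) (ihh _)

theorem polarMap_surjective : Function.Surjective polarMap := by
  rw [← MonoidHom.range_eq_top, eq_top_iff]
  rintro x -
  obtain ⟨u, rfl⟩ := QuotientGroup.mk_surjective x
  obtain ⟨p, q, hq, hu⟩ := IsFractionRing.div_surjective (A := ℂ[X]) (u : FractionRing ℂ[X])
  have hq0 : q ≠ 0 := nonZeroDivisors.ne_zero hq
  have hp0 : p ≠ 0 := by
    rintro rfl
    rw [map_zero, zero_div] at hu
    exact u.ne_zero hu.symm
  have hcls : (u : (FractionRing ℂ[X])ˣ ⧸ polarN) = polarCls p hp0 * (polarCls q hq0)⁻¹ := by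
    rw [polarCls, polarCls, ← QuotientGroup.mk_inv, ← QuotientGroup.mk_mul]
    congr 1
    ext
    simp [← hu, div_eq_mul_inv]
  rw [hcls]
  exact mul_mem (polarCls_mem_range hp0) (inv_mem (polarCls_mem_range hq0))

/-- Let `A = ℝ[x] ⊆ B = ℂ[x]`, `K = ℝ(x)`, `L = ℂ(x)`, and let
`ℍ = {z ∈ ℂ : Im z > 0}`.  The group homomorphism from the free abelian group on `ℍ`
to `Π(A) = L*/(B*·K*)` determined by sending the generator at `z ∈ ℍ` to the class of
`x − z` is an isomorphism; in particular `Π(ℝ[x])` is free abelian with basis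
`{[x − z] : z ∈ ℍ}`. -/
theorem polarGroup_real_line :
    ∃ φ : Multiplicative (FreeAbelianGroup {z : ℂ // 0 < z.im}) →*
        ((FractionRing (Polynomial ℂ))ˣ ⧸ polarN),
      (∀ z : {z : ℂ // 0 < z.im},
        φ (Multiplicative.ofAdd (FreeAbelianGroup.of z)) =
          polarCls (X - C z.1) (X_sub_C_ne_zero z.1)) ∧
      Function.Bijective φ :=
  ⟨polarMap, polarMap_of, polarMap_injective, polarMap_surjective⟩
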